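/- Let n ≥ 2 and let x ⋖ y ⋖ z in P_n^*, where the step x ⋖ y uncrosses a crossing of x formed by the pairs P_1, P_2, and the step y ⋖ z uncrosses a crossing of y formed by pairs Q_1, Q_2 that are also pairs of x (so the eight positions in P_1 ∪ P_2 ∪ Q_1 ∪ Q_2 are pairwise distinct). Then the involution y' obtained from x by applying to Q_1, Q_2 the same replacement (nesting or disjoint) that is used in the step y ⋖ z satisfies x ⋖ y' ⋖ z in P_n^*; in particular y' ≠ y. -/

import Mathlib

open Equiv Finset

/-- A candidate wire diagram: a permutation of the `2 n` endpoint positions. -/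
abbrev WDperm (n : ℕ) := Equiv.Perm (Fin (2 * n))

/-- `σ` is a wire diagram on `n` wires: a fixed-point-free involution of the `2 n` positions. -/
def IsWD {n : ℕ} (σ : WDperm n) : Prop := (∀ x, σ (σ x) = x) ∧ ∀ x, σ x ≠ x

instance IsWD.decPred {n : ℕ} : DecidablePred (@IsWD n) := fun σ => by
  unfold IsWD; infer_instance

/-- Positions `a < c` are first endpoints of a pair of crossing wires `{a, σ a}`, `{c, σ c}`,
i.e. `a < c < σ a < σ c`. -/
def IsCrossing {n : ℕ} (σ : WDperm n) (a c : Fin (2 * n)) : Prop :=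
  a < c ∧ c < σ a ∧ σ a < σ c

instance IsCrossing.dec {n : ℕ} (σ : WDperm n) (a c : Fin (2 * n)) :
    Decidable (IsCrossing σ a c) := by unfold IsCrossing; infer_instance

/-- The number `c(σ)` of crossings of `σ`. -/
def ncross {n : ℕ} (σ : WDperm n) : ℕ :=
  (Finset.univ.filter (fun p : Fin (2 * n) × Fin (2 * n) => IsCrossing σ p.1 p.2)).card

/-- The nesting uncrossing of the crossing `{a, σ a}, {c, σ c}` (with `a < c < σ a < σ c`):
replace the pairs `{a,b},{c,d}` by `{a,d},{b,c}` where `b = σ a`, `d = σ c`. -/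
def nestU {n : ℕ} (σ : WDperm n) (a c : Fin (2 * n)) : WDperm n :=
  Equiv.swap (σ a) (σ c) * σ * Equiv.swap (σ a) (σ c)

/-- The disjoint uncrossing: replace the pairs `{a,b},{c,d}` by `{a,c},{b,d}`. -/
def disjU {n : ℕ} (σ : WDperm n) (a c : Fin (2 * n)) : WDperm n :=
  Equiv.swap (σ a) c * σ * Equiv.swap (σ a) c

/-- `τ` is obtained from `σ` by a nesting uncrossing of some crossing of `σ`. -/
def IsNestStep {n : ℕ} (σ τ : WDperm n) : Prop := ∃ a c, IsCrossing σ a c ∧ τ = nestU σ a c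

/-- `τ` is obtained from `σ` by a disjoint uncrossing of some crossing of `σ`. -/
def IsDisjStep {n : ℕ} (σ τ : WDperm n) : Prop := ∃ a c, IsCrossing σ a c ∧ τ = disjU σ a c

/-- `τ` is obtained from `σ` by an uncrossing step that decreases the crossing number by one. -/
def UncCov {n : ℕ} (σ τ : WDperm n) : Prop :=
  (IsNestStep σ τ ∨ IsDisjStep σ τ) ∧ ncross τ + 1 = ncross σ

/-- The dual uncrossing poset `P_n^*`: wire diagrams together with a top element `none = 1̂`
(the adjoined element `0̂` of `P_n`). -/
abbrev PStar (n : ℕ) := Option {σ : WDperm n // IsWD σ}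

/-- The covering relation of `P_n^*`. -/
def Cov {n : ℕ} : PStar n → PStar n → Prop
  | some σ, some τ => UncCov σ.1 τ.1
  | some σ, none => ncross σ.1 = 0
  | none, _ => False

/-- The partial order of `P_n^*`: reflexive-transitive closure of the covering relation. -/
def ple {n : ℕ} : PStar n → PStar n → Prop := Relation.ReflTransGen Cov

/-- The (0-indexed) name `w(σ)(x)` of the wire through position `x`: the number of wires whose
first endpoint is strictly smaller than the first endpoint of the wire through `x`. -/
def word {n : ℕ} (σ : WDperm n) (x : Fin (2 * n)) : ℕ :=
  (Finset.univ.filter (fun a : Fin (2 * n) => a < σ a ∧ a < min x (σ x))).card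

/-- The start set `S(σ)`: the set of first endpoints of wires of `σ`. -/
def startSet {n : ℕ} (σ : WDperm n) : Finset (Fin (2 * n)) :=
  Finset.univ.filter (fun a => a < σ a)

/-- The noncrossing pair set `N(σ)` (on 0-indexed wire names): `(i, j)` with `i < j` for each
nested pair of wires `i < j`, and `(j, i)` for each disjoint pair of wires `i < j`. -/
def NPairs {n : ℕ} (σ : WDperm n) : Set (ℕ × ℕ) :=
  {p | ∃ a c : Fin (2 * n), a < σ a ∧ c < σ c ∧ a < c ∧
        ((σ c < σ a ∧ p = (word σ a, word σ c)) ∨ (σ a < c ∧ p = (word σ c, word σ a)))}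

/-- Lexicographic comparison of finsets via their increasing enumerations. -/
def finsetLexLE {m : ℕ} (A B : Finset (Fin m)) : Prop :=
  A = B ∨ List.Lex (· < ·) (A.sort (· ≤ ·)) (B.sort (· ≤ ·))

/-- Labels of the edge labeling: ordered pairs of (0-indexed) wire names, and a label `L`. -/
inductive Lbl where
  | pair : ℕ → ℕ → Lbl
  | L : Lbl
deriving DecidableEq

/-- The total order `<λ` on labels. -/
def lblLT : Lbl → Lbl → Prop
  | .pair i j, .pair i' j' =>
      if i < j then (if i' < j' then i < i' ∨ (i = i' ∧ j < j') else True)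
      else (if i' < j' then False else (j' < j ∨ (j = j' ∧ i' < i)))
  | .pair i j, .L => i < j
  | .L, .pair r s => s < r
  | .L, .L => False

/-- `≤λ` on labels. -/
def lblLE (p q : Lbl) : Prop := p = q ∨ lblLT p q

/-- The sorted list of positions where `σ` and `τ` differ. -/
def diffList {n : ℕ} (σ τ : WDperm n) : List (Fin (2 * n)) :=
  (Finset.univ.filter (fun x => σ x ≠ τ x)).sort (· ≤ ·)

/-- The edge labeling `λ` of `P_n^*`: an uncrossing of the crossing formed by wires `k < m`
of the lower diagram gets label `(k, m)` if it is the nesting uncrossing and `(m, k)` if it is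
the disjoint uncrossing; covers of the top element `1̂ = none` get the label `L`. -/
def lbl {n : ℕ} : PStar n → PStar n → Lbl
  | some σ, some τ =>
      match (diffList σ.1 τ.1)[0]?, (diffList σ.1 τ.1)[1]? with
      | some a, some c =>
          if τ.1 a = σ.1 c then Lbl.pair (word σ.1 a) (word σ.1 c)
          else Lbl.pair (word σ.1 c) (word σ.1 a)
      | _, _ => Lbl.L
  | _, _ => Lbl.L

/-- `c` is a saturated chain from `u` to `v` in `P_n^*`. -/
def SatChain {n : ℕ} (c : List (PStar n)) (u v : PStar n) : Prop :=
  c.Chain' Cov ∧ c.head? = some u ∧ c.getLast? = some v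

/-- The label sequence of a saturated chain. -/
def chainLabels {n : ℕ} (c : List (PStar n)) : List Lbl := c.zipWith lbl c.tail

/-- Lexicographic order on pairs of labels. -/
def pairLexLT (p q : Lbl × Lbl) : Prop := lblLT p.1 q.1 ∨ (p.1 = q.1 ∧ lblLT p.2 q.2)

/-- `x ⋖ y ⋖ z` is a topological ascent: its label pair is lexicographically strictly smaller
than the label pair of every other saturated chain from `x` to `z`. -/
def TopAscent {n : ℕ} (x y z : PStar n) : Prop :=
  Cov x y ∧ Cov y z ∧ ∀ y' : PStar n, Cov x y' → Cov y' z → y' ≠ y →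
    pairLexLT (lbl x y, lbl y z) (lbl x y', lbl y' z)

/-- `x ⋖ y ⋖ z` is a topological descent: a length-two chain that is not a topological ascent. -/
def TopDescent {n : ℕ} (x y z : PStar n) : Prop := Cov x y ∧ Cov y z ∧ ¬ TopAscent x y z

/-- Every length-two subchain of `c` is a topological ascent. -/
def AllTopAscents {n : ℕ} (c : List (PStar n)) : Prop :=
  ∀ x y z : PStar n, [x, y, z] <:+: c → TopAscent x y z

/-- The number of inversions of a permutation. -/
def numInv {n : ℕ} (π : Equiv.Perm (Fin n)) : ℕ :=
  (Finset.univ.filter (fun p : Fin n × Fin n => p.1 < p.2 ∧ π p.2 < π p.1)).card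

/-- One step of the Bruhat order: left multiplication by a transposition raising `inv` by one. -/
def BruhatStep {n : ℕ} (u v : Equiv.Perm (Fin n)) : Prop :=
  (∃ a b : Fin n, a ≠ b ∧ v = Equiv.swap a b * u) ∧ numInv v = numInv u + 1

/-- The Bruhat order on `S_n`. -/
def BruhatLE {n : ℕ} : Equiv.Perm (Fin n) → Equiv.Perm (Fin n) → Prop :=
  Relation.ReflTransGen BruhatStep

/-- The set of second endpoints of wires of `σ`. -/
def secondEnds {n : ℕ} (σ : WDperm n) : Finset (Fin (2 * n)) :=
  Finset.univ.filter (fun b => σ b < b)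

/-- The wire name at the `t`-th (0-indexed) second endpoint. -/
def piVal {n : ℕ} (σ : WDperm n) (t : ℕ) : ℕ :=
  (((secondEnds σ).sort (· ≤ ·))[t]?).elim 0 (word σ)

open Classical in
/-- The permutation `π(σ) ∈ S_n` reading the wire names at the second endpoints of `σ` in
increasing order of position. -/
noncomputable def piPerm {n : ℕ} (σ : WDperm n) : Equiv.Perm (Fin n) :=
  if h : Function.Bijective (fun t : Fin n =>
      if ht : piVal σ (t : ℕ) < n then (⟨piVal σ (t : ℕ), ht⟩ : Fin n) else t)
  then Equiv.ofBijective _ h else 1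

/-- Apply to the crossing at `(a, c)` the nesting (`nest = true`) or disjoint (`nest = false`)
uncrossing. -/
def uncrossAt {n : ℕ} (σ : WDperm n) (a c : Fin (2 * n)) (nest : Bool) : WDperm n :=
  if nest then nestU σ a c else disjU σ a c


/-!
Uncrossing the crossing at `a < c` is conjugation by a transposition of two of the four endpoints
`a, c, σ a, σ c`, so uncrossings on disjoint sets of endpoints commute: `z` is also reached from
`x` by first uncrossing `Q₁, Q₂` and then `P₁, P₂`, and the intermediate diagram differs from `y`
at `a`. Since `c(x) = c(z) + 2`, it remains to see that every uncrossing strictly lowers the number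
of crossings. The two new wires do not cross each other, the other wires are untouched, and a
further wire `W` crosses the two new wires at most as often as the two old ones: the endpoints
among `a < c < σ a < σ c` that lie inside `W` form a contiguous block, so if `W` separates them
two against two it crosses both old wires, and for any other split every pairing of the four
endpoints is crossed equally often.
-/

theorem Finset.sum_sum_eq_compl_add_mixed_add {α M : Type*} [Fintype α] [DecidableEq α]
    [AddCommMonoid M] (S : Finset α) (f : α → α → M) :
    ∑ p, ∑ q, f p q = ∑ p ∈ Sᶜ, ∑ q ∈ Sᶜ, f p q + ∑ w ∈ Sᶜ, ∑ s ∈ S, (f w s + f s w) +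
      ∑ p ∈ S, ∑ q ∈ S, f p q := by
  simp only [← Finset.sum_add_sum_compl S, Finset.sum_add_distrib]
  rw [Finset.sum_comm (s := S) (t := Sᶜ)]
  abel

section

variable {n : ℕ} {σ τ : WDperm n} {a c : Fin (2 * n)}

def crossInd (σ : WDperm n) (p q : Fin (2 * n)) : ℕ := if IsCrossing σ p q then 1 else 0

theorem ncross_eq_sum_crossInd (σ : WDperm n) : ncross σ = ∑ p, ∑ q, crossInd σ p q := by
  rw [ncross, Finset.card_filter, ← Finset.univ_product_univ, Finset.sum_product]
  rfl

theorem crossInd_eq_zero_of_apply_le_left {p : Fin (2 * n)} (q : Fin (2 * n))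
    (h : σ p ≤ p) : crossInd σ p q = 0 := by
  refine if_neg ?_
  rintro ⟨h₁, h₂, h₃⟩
  omega

theorem crossInd_eq_zero_of_apply_le_right (p : Fin (2 * n)) {q : Fin (2 * n)}
    (h : σ q ≤ q) : crossInd σ p q = 0 := by
  refine if_neg ?_
  rintro ⟨h₁, h₂, h₃⟩
  omega

theorem crossInd_add_crossInd_eq_ite {w s : Fin (2 * n)} (hw : w < σ w) (hs : s < σ s)
    (hsw : s ≠ w) (hσsw : σ s ≠ σ w) :
    crossInd σ w s + crossInd σ s w =
      if (w < s ∧ s < σ w ↔ w < σ s ∧ σ s < σ w) then 0 else 1 := by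
  unfold crossInd
  split_ifs <;> simp only [IsCrossing] at * <;> omega

theorem isCrossing_congr {p q : Fin (2 * n)} (hp : τ p = σ p) (hq : τ q = σ q) :
    IsCrossing τ p q ↔ IsCrossing σ p q := by
  rw [IsCrossing, IsCrossing, hp, hq]

theorem ncross_lt_of_eq_on_compl (S : Finset (Fin (2 * n)))
    (heq : ∀ p ∉ S, τ p = σ p)
    (hτ : ∀ p ∈ S, ∀ q ∈ S, ¬ IsCrossing τ p q)
    (hσ : ∃ p ∈ S, ∃ q ∈ S, IsCrossing σ p q)
    (hmixed : ∀ w ∉ S, ∑ s ∈ S, (crossInd τ w s + crossInd τ s w) ≤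
      ∑ s ∈ S, (crossInd σ w s + crossInd σ s w)) :
    ncross τ < ncross σ := by
  obtain ⟨p, hp, q, hq, hpq⟩ := hσ
  have houter : ∑ p ∈ Sᶜ, ∑ q ∈ Sᶜ, crossInd τ p q = ∑ p ∈ Sᶜ, ∑ q ∈ Sᶜ, crossInd σ p q := by
    refine Finset.sum_congr rfl fun p hp => Finset.sum_congr rfl fun q hq => ?_
    simp only [crossInd, isCrossing_congr (heq p (Finset.mem_compl.1 hp))
      (heq q (Finset.mem_compl.1 hq))]
  have hmix := Finset.sum_le_sum fun w hw => hmixed w (Finset.mem_compl.1 hw)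
  have hinτ : ∑ p ∈ S, ∑ q ∈ S, crossInd τ p q = 0 :=
    Finset.sum_eq_zero fun p hp => Finset.sum_eq_zero fun q hq => if_neg (hτ p hp q hq)
  have hinσ : 0 < ∑ p ∈ S, ∑ q ∈ S, crossInd σ p q := calc
    0 < crossInd σ p q := by simp [crossInd, hpq]
    _ ≤ ∑ q ∈ S, crossInd σ p q := Finset.single_le_sum (fun _ _ => Nat.zero_le _) hq
    _ ≤ _ := Finset.single_le_sum (f := fun p => ∑ q ∈ S, crossInd σ p q)
      (fun _ _ => Nat.zero_le _) hp
  rw [ncross_eq_sum_crossInd, ncross_eq_sum_crossInd, Finset.sum_sum_eq_compl_add_mixed_add S,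
    Finset.sum_sum_eq_compl_add_mixed_add S]
  omega

theorem uncrossAt_eq_swap_mul_mul_swap (σ : WDperm n) (a c : Fin (2 * n)) (β : Bool) :
    uncrossAt σ a c β =
      swap (σ a) (if β then σ c else c) * σ * swap (σ a) (if β then σ c else c) := by
  cases β <;> rfl

theorem IsWD.swap_mul_mul_swap (hσ : IsWD σ) (u v : Fin (2 * n)) :
    IsWD (swap u v * σ * swap u v) := by
  refine ⟨fun t => by simp [Perm.mul_apply, hσ.1 _], fun t ht => hσ.2 (swap u v t) ?_⟩
  simpa [Perm.mul_apply] using congrArg (swap u v) ht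

theorem IsWD.uncrossAt (hσ : IsWD σ) (a c : Fin (2 * n)) (β : Bool) :
    IsWD (uncrossAt σ a c β) := by
  rw [uncrossAt_eq_swap_mul_mul_swap]
  exact hσ.swap_mul_mul_swap _ _

theorem uncCov_uncrossAt (hc : IsCrossing σ a c) (β : Bool)
    (h : ncross (uncrossAt σ a c β) + 1 = ncross σ) : UncCov σ (uncrossAt σ a c β) := by
  cases β
  · exact ⟨Or.inr ⟨a, c, hc, rfl⟩, h⟩
  · exact ⟨Or.inl ⟨a, c, hc, rfl⟩, h⟩

theorem nestU_apply (hσ : Function.Involutive σ) (hc : IsCrossing σ a c) :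
    nestU σ a c a = σ c ∧ nestU σ a c c = σ a ∧ nestU σ a c (σ a) = c ∧ nestU σ a c (σ c) = a := by
  obtain ⟨h₁, h₂, h₃⟩ := hc
  have : a ≠ σ a := by omega
  have : a ≠ σ c := by omega
  have : c ≠ σ a := by omega
  have : c ≠ σ c := by omega
  have : σ a ≠ σ c := by omega
  simp [nestU, Perm.mul_apply, swap_apply_def, hσ _, *, Ne.symm]

theorem disjU_apply (hσ : Function.Involutive σ) (hc : IsCrossing σ a c) :
    disjU σ a c a = c ∧ disjU σ a c c = a ∧ disjU σ a c (σ a) = σ c ∧ disjU σ a c (σ c) = σ a := by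
  obtain ⟨h₁, h₂, h₃⟩ := hc
  have : a ≠ σ a := by omega
  have : a ≠ c := by omega
  have : c ≠ σ a := by omega
  have : c ≠ σ c := by omega
  have : σ a ≠ σ c := by omega
  simp [disjU, Perm.mul_apply, swap_apply_def, hσ _, *, Ne.symm]

theorem uncrossAt_apply_of_ne (hσ : Function.Involutive σ) (β : Bool) {t : Fin (2 * n)}
    (hta : t ≠ a) (htc : t ≠ c) (htb : t ≠ σ a) (htd : t ≠ σ c) : uncrossAt σ a c β t = σ t := by
  have h₁ : σ t ≠ σ a := σ.injective.ne hta
  have h₂ : σ t ≠ σ c := σ.injective.ne htc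
  have h₃ : σ t ≠ c := fun h => htd (by rw [← h, hσ])
  cases β <;> simp [uncrossAt, nestU, disjU, Perm.mul_apply, swap_apply_of_ne_of_ne, *]

theorem uncrossAt_apply_support (hσ : Function.Involutive σ) (hc : IsCrossing σ a c) (β : Bool) :
    (uncrossAt σ a c β a = σ c ∧ uncrossAt σ a c β c = σ a ∧
        uncrossAt σ a c β (σ a) = c ∧ uncrossAt σ a c β (σ c) = a) ∨
      (uncrossAt σ a c β a = c ∧ uncrossAt σ a c β c = a ∧
        uncrossAt σ a c β (σ a) = σ c ∧ uncrossAt σ a c β (σ c) = σ a) := by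
  cases β
  · exact Or.inr (disjU_apply hσ hc)
  · exact Or.inl (nestU_apply hσ hc)

theorem not_isCrossing_uncrossAt (hσ : Function.Involutive σ) (hc : IsCrossing σ a c) (β : Bool)
    {p q : Fin (2 * n)} (hp : p ∈ ({a, c, σ a, σ c} : Finset _))
    (hq : q ∈ ({a, c, σ a, σ c} : Finset _)) : ¬ IsCrossing (uncrossAt σ a c β) p q := by
  have ⟨h₁, h₂, h₃⟩ := hc
  simp only [Finset.mem_insert, Finset.mem_singleton] at hp hq
  rintro ⟨k₁, k₂, k₃⟩
  rcases uncrossAt_apply_support hσ hc β with ⟨e₁, e₂, e₃, e₄⟩ | ⟨e₁, e₂, e₃, e₄⟩ <;>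
    rcases hp with rfl | rfl | rfl | rfl <;> rcases hq with rfl | rfl | rfl | rfl <;>
    simp only [e₁, e₂, e₃, e₄] at k₂ k₃ <;> omega

theorem sum_crossInd_uncrossAt_le (hσ : Function.Involutive σ) (hc : IsCrossing σ a c) (β : Bool)
    {w : Fin (2 * n)} (hw : w ∉ ({a, c, σ a, σ c} : Finset _)) :
    ∑ s ∈ {a, c, σ a, σ c}, (crossInd (uncrossAt σ a c β) w s + crossInd (uncrossAt σ a c β) s w) ≤
      ∑ s ∈ {a, c, σ a, σ c}, (crossInd σ w s + crossInd σ s w) := by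
  have ⟨h₁, h₂, h₃⟩ := hc
  have hσa := hσ a
  have hσc := hσ c
  simp only [Finset.mem_insert, Finset.mem_singleton, not_or] at hw
  obtain ⟨hwa, hwc, hwb, hwd⟩ := hw
  have hτw := uncrossAt_apply_of_ne hσ β hwa hwc hwb hwd
  have ha : a ∉ ({c, σ a, σ c} : Finset _) := by simp; omega
  have hc' : c ∉ ({σ a, σ c} : Finset _) := by simp; omega
  have hb : σ a ∉ ({σ c} : Finset _) := by simp; omega
  simp only [Finset.sum_insert ha, Finset.sum_insert hc', Finset.sum_insert hb,
    Finset.sum_singleton]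
  rcases le_or_gt (σ w) w with hv | hv
  · simp (disch := omega) only [crossInd_eq_zero_of_apply_le_left,
      crossInd_eq_zero_of_apply_le_right, add_zero, le_refl]
  have hva : σ w ≠ a := fun h => hwb (by rw [← h, hσ])
  have hvc : σ w ≠ c := fun h => hwd (by rw [← h, hσ])
  have hvb : σ w ≠ σ a := σ.injective.ne hwa
  have hvd : σ w ≠ σ c := σ.injective.ne hwc
  rcases uncrossAt_apply_support hσ hc β with ⟨e₁, e₂, e₃, e₄⟩ | ⟨e₁, e₂, e₃, e₄⟩ <;>
    simp (disch := omega) only [crossInd_eq_zero_of_apply_le_left,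
      crossInd_eq_zero_of_apply_le_right, add_zero, crossInd_add_crossInd_eq_ite] <;>
    simp only [e₁, e₂, e₃, hτw] <;>
    split_ifs <;> omega

theorem ncross_uncrossAt_lt (hσ : Function.Involutive σ) (hc : IsCrossing σ a c) (β : Bool) :
    ncross (uncrossAt σ a c β) < ncross σ := by
  refine ncross_lt_of_eq_on_compl {a, c, σ a, σ c} (fun t ht => ?_)
    (fun p hp q hq => not_isCrossing_uncrossAt hσ hc β hp hq) ⟨a, by simp, c, by simp, hc⟩
    (fun w hw => sum_crossInd_uncrossAt_le hσ hc β hw)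
  simp only [Finset.mem_insert, Finset.mem_singleton, not_or] at ht
  exact uncrossAt_apply_of_ne hσ β ht.1 ht.2.1 ht.2.2.1 ht.2.2.2

theorem uncrossAt_apply_left_ne (hσ : Function.Involutive σ)
    (hc : IsCrossing σ a c) (β : Bool) : uncrossAt σ a c β a ≠ σ a := by
  have ⟨h₁, h₂, h₃⟩ := hc
  rcases uncrossAt_apply_support hσ hc β with ⟨e, -⟩ | ⟨e, -⟩ <;> rw [e] <;> omega

theorem uncrossAt_apply_of_nodup (hσ : Function.Involutive σ) {a' c' : Fin (2 * n)}
    (hnd : [a, c, σ a, σ c, a', c', σ a', σ c'].Nodup) (β' : Bool) :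
    uncrossAt σ a' c' β' a = σ a ∧ uncrossAt σ a' c' β' c = σ c := by
  simp only [List.nodup_cons, List.mem_cons, List.not_mem_nil, or_false, not_or] at hnd
  constructor <;> apply uncrossAt_apply_of_ne hσ β' <;> tauto

theorem uncrossAt_uncrossAt_comm (hσ : Function.Involutive σ) {a' c' : Fin (2 * n)}
    (hnd : [a, c, σ a, σ c, a', c', σ a', σ c'].Nodup) (β β' : Bool) :
    uncrossAt (uncrossAt σ a c β) a' c' β' = uncrossAt (uncrossAt σ a' c' β') a c β := by
  have hnd' : [a', c', σ a', σ c', a, c, σ a, σ c].Nodup :=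
    (List.perm_append_comm (l₁ := [a, c, σ a, σ c]) (l₂ := [a', c', σ a', σ c'])).nodup_iff.1 hnd
  obtain ⟨h₁, h₂⟩ := uncrossAt_apply_of_nodup hσ hnd' β
  obtain ⟨h₃, h₄⟩ := uncrossAt_apply_of_nodup hσ hnd β'
  have hcomm :
      Commute (swap (σ a) (if β then σ c else c)) (swap (σ a') (if β' then σ c' else c')) := by
    simp only [List.nodup_cons, List.mem_cons, List.not_mem_nil, or_false, not_or] at hnd
    exact (Perm.disjoint_swap_swap (by cases β <;> cases β' <;> simp <;> tauto)).commute
  rw [uncrossAt_eq_swap_mul_mul_swap (uncrossAt σ a c β), h₁, h₂,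
    uncrossAt_eq_swap_mul_mul_swap (uncrossAt σ a' c' β'), h₃, h₄,
    uncrossAt_eq_swap_mul_mul_swap σ a c, uncrossAt_eq_swap_mul_mul_swap σ a' c']
  simp only [← mul_assoc, hcomm.eq]
  rw [mul_assoc _ (swap (σ a) _), hcomm.eq]
  simp only [mul_assoc]

end

theorem commute_disjoint_uncrossings_general (n : ℕ)
    (x y z : {σ : WDperm n // IsWD σ})
    (a c a' c' : Fin (2 * n)) (b₁ b₂ : Bool)
    (hc1 : IsCrossing x.1 a c) (hy : y.1 = uncrossAt x.1 a c b₁)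
    (hcov1 : ncross y.1 + 1 = ncross x.1)
    (hc2 : IsCrossing y.1 a' c') (hz : z.1 = uncrossAt y.1 a' c' b₂)
    (hcov2 : ncross z.1 + 1 = ncross y.1)
    (hQx : x.1 a' = y.1 a' ∧ x.1 c' = y.1 c')
    (hdist : ([a, c, x.1 a, x.1 c, a', c', y.1 a', y.1 c'] :
        List (Fin (2 * n))).Pairwise (· ≠ ·)) :
    ∃ h : IsWD (uncrossAt x.1 a' c' b₂),
      Cov (some x) (some ⟨uncrossAt x.1 a' c' b₂, h⟩) ∧
      Cov (some ⟨uncrossAt x.1 a' c' b₂, h⟩) (some z) ∧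
      uncrossAt x.1 a' c' b₂ ≠ y.1 := by
  have hx : Function.Involutive x.1 := x.2.1
  have hnd : [a, c, x.1 a, x.1 c, a', c', x.1 a', x.1 c'].Nodup := by rwa [hQx.1, hQx.2]
  have hc2x : IsCrossing x.1 a' c' := (isCrossing_congr hQx.1.symm hQx.2.symm).1 hc2
  obtain ⟨hy'a, hy'c⟩ := uncrossAt_apply_of_nodup hx hnd b₂
  have hc1' : IsCrossing (uncrossAt x.1 a' c' b₂) a c := (isCrossing_congr hy'a hy'c).2 hc1
  have hz' : z.1 = uncrossAt (uncrossAt x.1 a' c' b₂) a c b₁ := by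
    rw [hz, hy, uncrossAt_uncrossAt_comm hx hnd]
  have hlt₁ := ncross_uncrossAt_lt hx hc2x b₂
  have hlt₂ := ncross_uncrossAt_lt (x.2.uncrossAt a' c' b₂).1 hc1' b₁
  rw [← hz'] at hlt₂
  have hcount₂ : ncross z.1 + 1 = ncross (uncrossAt x.1 a' c' b₂) := by omega
  refine ⟨x.2.uncrossAt a' c' b₂, uncCov_uncrossAt hc2x b₂ (by omega), ?_, fun h => ?_⟩
  · show UncCov _ z.1
    rw [hz'] at hcount₂ ⊢
    exact uncCov_uncrossAt hc1' b₁ hcount₂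
  · exact uncrossAt_apply_left_ne hx hc1 b₁ (by rw [← hy, ← h, hy'a])

/-- If the two uncrossing steps `x ⋖ y` and `y ⋖ z` involve four disjoint pairs (eight distinct
positions, with the pairs uncrossed in the second step already pairs of `x`), then the two
uncrossings may be performed in the other order: the diagram `y'` obtained from `x` by the
second uncrossing satisfies `x ⋖ y' ⋖ z`, and `y' ≠ y`. -/
theorem commute_disjoint_uncrossings (n : ℕ) (hn : 2 ≤ n)
    (x y z : {σ : WDperm n // IsWD σ})
    (a c a' c' : Fin (2 * n)) (b₁ b₂ : Bool)
    (hc1 : IsCrossing x.1 a c) (hy : y.1 = uncrossAt x.1 a c b₁)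
    (hcov1 : ncross y.1 + 1 = ncross x.1)
    (hc2 : IsCrossing y.1 a' c') (hz : z.1 = uncrossAt y.1 a' c' b₂)
    (hcov2 : ncross z.1 + 1 = ncross y.1)
    (hQx : x.1 a' = y.1 a' ∧ x.1 c' = y.1 c')
    (hdist : ([a, c, x.1 a, x.1 c, a', c', y.1 a', y.1 c'] :
        List (Fin (2 * n))).Pairwise (· ≠ ·)) :
    ∃ h : IsWD (uncrossAt x.1 a' c' b₂),
      Cov (some x) (some ⟨uncrossAt x.1 a' c' b₂, h⟩) ∧
      Cov (some ⟨uncrossAt x.1 a' c' b₂, h⟩) (some z) ∧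
      uncrossAt x.1 a' c' b₂ ≠ y.1 :=
  commute_disjoint_uncrossings_general n x y z a c a' c' b₁ b₂ hc1 hy hcov1 hc2 hz hcov2 hQx hdist
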